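/- Let T = (S,Σ,κ) be an STS, μ a probability measure on S, and B ∈ Σ. Then T is strongly decisive w.r.t. B from μ (SD(μ,B)) if and only if T is persistently decisive w.r.t. B from μ (PD(μ,B)). -/

import Mathlib

open MeasureTheory ProbabilityTheory ENNReal Filter Topology

namespace STS

variable {S : Type*} [MeasurableSpace S]

/-- Probability of the cylinder `Cyl(A 0, …, A n)` for the Markov chain with kernel `κ`
and initial distribution `μ`. -/
noncomputable def cylProb (κ : Kernel S S) : ℕ → Measure S → (ℕ → Set S) → ℝ≥0∞
  | 0, μ, A => μ (A 0)
  | n + 1, μ, A => ∫⁻ s in A 0, cylProb κ n (κ s) (fun i => A (i + 1)) ∂μ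

/-- `P` assigns to each initial (probability) distribution the path measure (on `ℕ → S`,
with the product σ-algebra) of the time-homogeneous Markov chain with transition kernel `κ`,
as given by the Ionescu–Tulcea construction: it is the unique probability measure giving
cylinders their prescribed probabilities. -/
def IsPathMeasure (κ : Kernel S S) (P : Measure S → Measure (ℕ → S)) : Prop :=
  ∀ μ : Measure S, IsProbabilityMeasure μ →
    IsProbabilityMeasure (P μ) ∧
    ∀ (n : ℕ) (A : ℕ → Set S), (∀ i, MeasurableSet (A i)) →
      P μ {ρ | ∀ i ≤ n, ρ i ∈ A i} = cylProb κ n μ A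

/-- The path event `F B`: eventually reach `B`. -/
def evF (B : Set S) : Set (ℕ → S) := {ρ | ∃ k, ρ k ∈ B}

/-- The path event `F≤n B`. -/
def evFle (n : ℕ) (B : Set S) : Set (ℕ → S) := {ρ | ∃ k ≤ n, ρ k ∈ B}

/-- The path event `F≥p B`. -/
def evFge (p : ℕ) (B : Set S) : Set (ℕ → S) := {ρ | ∃ k, p ≤ k ∧ ρ k ∈ B}

/-- The path event `GF B`: visit `B` infinitely often. -/
def evGF (B : Set S) : Set (ℕ → S) := {ρ | ∀ n, ∃ k, n ≤ k ∧ ρ k ∈ B}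

/-- The path event `FG B`: eventually stay in `B` forever. -/
def evFG (B : Set S) : Set (ℕ → S) := {ρ | ∃ n, ∀ k, n ≤ k → ρ k ∈ B}

/-- The until event `B' U B`. -/
def evU (B' B : Set S) : Set (ℕ → S) := {ρ | ∃ k, ρ k ∈ B ∧ ∀ j < k, ρ j ∈ B'}

/-- The bounded until event `B' U≤n B`. -/
def evUle (n : ℕ) (B' B : Set S) : Set (ℕ → S) := {ρ | ∃ k ≤ n, ρ k ∈ B ∧ ∀ j < k, ρ j ∈ B'}

/-- The avoid-set `B̃` of `B`: states from which `B` is reached with probability `0`. -/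
def avoid (P : Measure S → Measure (ℕ → S)) (B : Set S) : Set S :=
  {s | P (Measure.dirac s) (evF B) = 0}

/-- `T` is decisive w.r.t. `B` from `μ`. -/
def Decisive (P : Measure S → Measure (ℕ → S)) (μ : Measure S) (B : Set S) : Prop :=
  P μ (evF B ∪ evF (avoid P B)) = 1

/-- `T` is strongly decisive w.r.t. `B` from `μ`. -/
def StronglyDecisive (P : Measure S → Measure (ℕ → S)) (μ : Measure S) (B : Set S) : Prop :=
  P μ (evGF B ∪ evF (avoid P B)) = 1

/-- `T` is persistently decisive w.r.t. `B` from `μ`. -/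
def PersistentlyDecisive (P : Measure S → Measure (ℕ → S)) (μ : Measure S) (B : Set S) : Prop :=
  ∀ p : ℕ, P μ (evFge p B ∪ evFge p (avoid P B)) = 1

/-- `PreProb(B)`: measurable sets `B'` from which `B` is reached in one step with positive
probability, whatever the initial distribution concentrated on `B'`. -/
def PreProb (P : Measure S → Measure (ℕ → S)) (B : Set S) : Set (Set S) :=
  {B' | MeasurableSet B' ∧ ∀ μ' : Measure S, IsProbabilityMeasure μ' → μ' B' = 1 →
    0 < P μ' {ρ | ρ 0 ∈ B' ∧ ρ 1 ∈ B}}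

/-- `T` is fair w.r.t. `B` from `μ`. -/
def Fair (P : Measure S → Measure (ℕ → S)) (μ : Measure S) (B : Set S) : Prop :=
  ∀ B' ∈ PreProb P B, 0 < P μ (evGF B') →
    P μ (evGF B ∩ evGF B') = P μ (evGF B')

/-- The one-step measure transformer `Ω_T`. -/
noncomputable def Omega (κ : Kernel S S) (μ : Measure S) : Measure S :=
  μ.bind (fun s => κ s)

/-- Two measures are qualitatively equivalent if they have the same null (measurable) sets. -/
def QualEquiv {T : Type*} [MeasurableSpace T] (μ ν : Measure T) : Prop :=
  ∀ A : Set T, MeasurableSet A → (μ A = 0 ↔ ν A = 0)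

/-- `T₂ = (S₂,κ₂)` is an `α`-abstraction of `T₁ = (S₁,κ₁)`. -/
def IsAbstraction {S₁ S₂ : Type*} [MeasurableSpace S₁] [MeasurableSpace S₂]
    (κ₁ : Kernel S₁ S₁) (κ₂ : Kernel S₂ S₂) (α : S₁ → S₂) : Prop :=
  ∀ μ : Measure S₁, IsProbabilityMeasure μ →
    QualEquiv (Measure.map α (Omega κ₁ μ)) (Omega κ₂ (Measure.map α μ))


/-! The avoid-set `B̃` is absorbing. For `s ∈ B̃`, the probability of hitting `B` at time `k + 1`
from `s` is `∫ P_{δ_t}(ρ k ∈ B) dκ(s, t) = 0`, so `κ(s, B̃ᶜ) = 0`, and a cylinder computation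
shows that almost no path leaves `B̃` after entering it. On a path that never leaves `B̃`,
`GF B ∪ F B̃` is the same event as `⋂ p, F≥p B ∪ F≥p B̃`, and a countable intersection of almost
sure events is almost sure. -/

section CylProb

variable (κ : Kernel S S)

lemma measurable_cylProb_kernel (n : ℕ) {A : ℕ → Set S} (hA : ∀ i, MeasurableSet (A i)) :
    Measurable fun s => cylProb κ n (κ s) A := by
  induction n generalizing A with
  | zero => exact κ.measurable_coe (hA 0)
  | succ n ih =>
    simp only [cylProb, ← lintegral_indicator (hA 0)]
    exact (Measure.measurable_lintegral ((ih fun i => hA (i + 1)).indicator (hA 0))).comp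
      κ.measurable

lemma cylProb_dirac_succ (n : ℕ) {A : ℕ → Set S} (hA : ∀ i, MeasurableSet (A i)) (s : S) :
    cylProb κ (n + 1) (Measure.dirac s) A
      = (A 0).indicator (fun t => cylProb κ n (κ t) fun i => A (i + 1)) s := by
  classical
  rw [cylProb, setLIntegral_dirac' (measurable_cylProb_kernel κ n fun i => hA (i + 1)) (hA 0),
    Set.indicator_apply]

lemma measurable_cylProb_dirac (n : ℕ) {A : ℕ → Set S} (hA : ∀ i, MeasurableSet (A i)) :
    Measurable fun s => cylProb κ n (Measure.dirac s) A := by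
  cases n with
  | zero => simpa [cylProb, Measure.dirac_apply' _ (hA 0)] using measurable_one.indicator (hA 0)
  | succ n =>
    simp only [cylProb_dirac_succ κ n hA]
    exact (measurable_cylProb_kernel κ n fun i => hA (i + 1)).indicator (hA 0)

lemma cylProb_eq_lintegral_dirac (n : ℕ) {A : ℕ → Set S} (hA : ∀ i, MeasurableSet (A i))
    (μ : Measure S) : cylProb κ n μ A = ∫⁻ s, cylProb κ n (Measure.dirac s) A ∂μ := by
  cases n with
  | zero => simp [cylProb, Measure.dirac_apply' _ (hA 0), lintegral_indicator_one (hA 0)]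
  | succ n => rw [funext (cylProb_dirac_succ κ n hA), lintegral_indicator (hA 0), cylProb]

lemma cylProb_eq_zero_of_exit {C : Set S} (hC : MeasurableSet C) (hstay : ∀ s ∈ C, κ s Cᶜ = 0)
    (k : ℕ) (μ : Measure S) {A : ℕ → Set S} (hk : A k = C) (hk' : A (k + 1) = Cᶜ) :
    cylProb κ (k + 1) μ A = 0 := by
  induction k generalizing μ A with
  | zero =>
    rw [cylProb, hk, setLIntegral_congr_fun hC fun s hs => (hk' ▸ hstay s hs : _), lintegral_zero]
  | succ k ih =>
    rw [cylProb, lintegral_congr fun s => ih (κ s) (A := fun i => A (i + 1)) hk hk',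
      lintegral_zero]

end CylProb

section Sequences

variable {α : Type*}

def hitAt (k : ℕ) (B : Set α) : ℕ → Set α := fun i => if i = k then B else Set.univ

lemma hitAt_succ_zero (k : ℕ) (B : Set α) : hitAt (k + 1) B 0 = Set.univ :=
  if_neg k.succ_ne_zero.symm

lemma hitAt_succ_tail (k : ℕ) (B : Set α) : (fun i => hitAt (k + 1) B (i + 1)) = hitAt k B := by
  ext1 i; simp [hitAt]

lemma setOf_forall_le_mem_hitAt (k : ℕ) (B : Set α) :
    {ρ : ℕ → α | ∀ i ≤ k, ρ i ∈ hitAt k B i} = {ρ | ρ k ∈ B} := by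
  ext ρ
  refine ⟨fun h => by simpa [hitAt] using h k le_rfl, fun h i _ => ?_⟩
  unfold hitAt; split_ifs with hi
  · exact hi ▸ h
  · trivial

lemma mem_evGF_union_evF_iff {ρ : ℕ → α} {B C : Set α} (hC : ∀ k, ρ k ∈ C → ρ (k + 1) ∈ C) :
    ρ ∈ evGF B ∪ evF C ↔ ∀ p, ρ ∈ evFge p B ∪ evFge p C := by
  constructor
  · rintro (hB | ⟨k, hk⟩) p
    · exact .inl (hB p)
    · exact .inr ⟨max k p, le_max_right k p,
        Nat.le_induction hk (fun n _ => hC n) _ (le_max_left k p)⟩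
  · intro h
    by_cases hF : ρ ∈ evF C
    · exact .inr hF
    · refine .inl fun n => (h n).resolve_right ?_
      rintro ⟨k, -, hk⟩
      exact hF ⟨k, hk⟩

end Sequences

lemma measurableSet_hitAt (k : ℕ) {B : Set S} (hB : MeasurableSet B) (i : ℕ) :
    MeasurableSet (hitAt k B i) := by
  unfold hitAt; split_ifs <;> simp [hB]

lemma measurableSet_evF {B : Set S} (hB : MeasurableSet B) : MeasurableSet (evF B) := by
  unfold evF; measurability

lemma measurableSet_evFge (p : ℕ) {B : Set S} (hB : MeasurableSet B) :
    MeasurableSet (evFge p B) := by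
  unfold evFge; measurability

lemma measurableSet_evGF {B : Set S} (hB : MeasurableSet B) : MeasurableSet (evGF B) := by
  unfold evGF; measurability

section PathMeasure

variable {κ : Kernel S S} {P : Measure S → Measure (ℕ → S)}

lemma IsPathMeasure.apply_eval_mem (hP : IsPathMeasure κ P) (μ : Measure S)
    [IsProbabilityMeasure μ] (k : ℕ) {B : Set S} (hB : MeasurableSet B) :
    P μ {ρ | ρ k ∈ B} = cylProb κ k μ (hitAt k B) := by
  rw [← (hP μ ‹_›).2 k _ (measurableSet_hitAt k hB), setOf_forall_le_mem_hitAt]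

lemma IsPathMeasure.avoid_eq (hP : IsPathMeasure κ P) {B : Set S} (hB : MeasurableSet B) :
    avoid P B = ⋂ k, {s | cylProb κ k (Measure.dirac s) (hitAt k B) = 0} := by
  have hF : evF B = ⋃ k, {ρ : ℕ → S | ρ k ∈ B} := by ext; simp [evF]
  ext s
  simp only [avoid, Set.mem_ofPred_eq, Set.mem_iInter, hF, measure_iUnion_null_iff,
    hP.apply_eval_mem _ _ hB]

lemma IsPathMeasure.measurableSet_avoid (hP : IsPathMeasure κ P) {B : Set S}
    (hB : MeasurableSet B) : MeasurableSet (avoid P B) := by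
  rw [hP.avoid_eq hB]
  exact .iInter fun k =>
    measurable_cylProb_dirac κ k (measurableSet_hitAt k hB) (measurableSet_singleton 0)

lemma IsPathMeasure.kernel_compl_avoid (hP : IsPathMeasure κ P) {B : Set S}
    (hB : MeasurableSet B) {s : S} (hs : s ∈ avoid P B) : κ s (avoid P B)ᶜ = 0 := by
  rw [hP.avoid_eq hB] at hs ⊢
  rw [Set.compl_iInter]
  refine measure_iUnion_null fun k => ?_
  have h := Set.mem_iInter.1 hs (k + 1)
  rw [Set.mem_ofPred_eq, cylProb_dirac_succ κ k (measurableSet_hitAt _ hB), hitAt_succ_zero,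
    Set.indicator_univ, hitAt_succ_tail,
    cylProb_eq_lintegral_dirac κ k (measurableSet_hitAt k hB),
    lintegral_eq_zero_iff (measurable_cylProb_dirac κ k (measurableSet_hitAt k hB))] at h
  exact ae_iff.1 h

lemma IsPathMeasure.apply_exit_eq_zero (hP : IsPathMeasure κ P) (μ : Measure S)
    [IsProbabilityMeasure μ] {C : Set S} (hC : MeasurableSet C) (hstay : ∀ s ∈ C, κ s Cᶜ = 0)
    (k : ℕ) : P μ {ρ | ρ k ∈ C ∧ ρ (k + 1) ∉ C} = 0 := by
  let A : ℕ → Set S := fun i => if i = k then C else if i = k + 1 then Cᶜ else Set.univ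
  have hA : ∀ i, MeasurableSet (A i) := fun i => by
    simp only [A]; split_ifs <;> simp [hC]
  have hcyl : {ρ : ℕ → S | ρ k ∈ C ∧ ρ (k + 1) ∉ C} = {ρ | ∀ i ≤ k + 1, ρ i ∈ A i} := by
    ext ρ
    refine ⟨fun ⟨h, h'⟩ i hi => ?_,
      fun h => ⟨by simpa [A] using h k (by omega), by simpa [A] using h (k + 1) le_rfl⟩⟩
    simp only [A]
    split_ifs with h₁ h₂
    · exact h₁ ▸ h
    · exact h₂ ▸ h'
    · trivial
  rw [hcyl, (hP μ ‹_›).2 _ _ hA]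
  exact cylProb_eq_zero_of_exit κ hC hstay k μ (by simp [A]) (by simp [A])

lemma IsPathMeasure.ae_mem_avoid_succ (hP : IsPathMeasure κ P) (μ : Measure S)
    [IsProbabilityMeasure μ] {B : Set S} (hB : MeasurableSet B) :
    ∀ᵐ ρ ∂P μ, ∀ k, ρ k ∈ avoid P B → ρ (k + 1) ∈ avoid P B := by
  refine ae_all_iff.2 fun k => ae_iff.2 ?_
  simp only [Classical.not_imp]
  exact hP.apply_exit_eq_zero μ (hP.measurableSet_avoid hB)
    (fun s hs => hP.kernel_compl_avoid hB hs) k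

end PathMeasure

theorem statement_4_general {S : Type*} [MeasurableSpace S]
    (κ : Kernel S S)
    (P : Measure S → Measure (ℕ → S)) (hP : IsPathMeasure κ P)
    (μ : Measure S) (hμ : IsProbabilityMeasure μ)
    (B : Set S) (hB : MeasurableSet B) :
    StronglyDecisive P μ B ↔ PersistentlyDecisive P μ B := by
  have hA := hP.measurableSet_avoid hB
  have := (hP μ hμ).1
  rw [StronglyDecisive, PersistentlyDecisive,
    ← mem_ae_iff_prob_eq_one ((measurableSet_evGF hB).union (measurableSet_evF hA))]
  simp only [← mem_ae_iff_prob_eq_one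
    ((measurableSet_evFge _ hB).union (measurableSet_evFge _ hA))]
  change (∀ᵐ ρ ∂P μ, _) ↔ ∀ p, ∀ᵐ ρ ∂P μ, _
  rw [← ae_all_iff]
  exact eventually_congr ((hP.ae_mem_avoid_succ μ hB).mono fun ρ hρ => mem_evGF_union_evF_iff hρ)

/-- strong decisiveness and persistent decisiveness w.r.t. `B` from `μ`
are equivalent. -/
theorem statement_4 {S : Type*} [MeasurableSpace S]
    (κ : Kernel S S) [IsMarkovKernel κ]
    (P : Measure S → Measure (ℕ → S)) (hP : IsPathMeasure κ P)
    (μ : Measure S) (hμ : IsProbabilityMeasure μ)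
    (B : Set S) (hB : MeasurableSet B) :
    StronglyDecisive P μ B ↔ PersistentlyDecisive P μ B :=
  statement_4_general κ P hP μ hμ B hB

end STS
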